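/- For every u ∈ ℝ³ with u ≠ 0, the map v ↦ exp(v^∧) from ℝ³ to 3×3 real matrices is differentiable at u, and its derivative in the direction w ∈ ℝ³ equals exp(u^∧)·(J_u w)^∧, where J_u = I₃ − ((1 − cos‖u‖)/‖u‖²) u^∧ + ((‖u‖ − sin‖u‖)/‖u‖³) (u^∧)². That is, J_u is the left-trivialised Jacobian of the exponential map of SO(3) at u. -/

import Mathlib

open Matrix

noncomputable section

/-- The `hat` map sending `u ∈ ℝ³` to the skew-symmetric matrix `u^∧` with `u^∧ v = u × v`. -/
def hat (u : EuclideanSpace ℝ (Fin 3)) : Matrix (Fin 3) (Fin 3) ℝ :=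
  !![0, -u 2, u 1; u 2, 0, -u 0; -u 1, u 0, 0]

/-- `R ∈ SO(3)`: real 3×3 matrices with `RᵀR = I` and `det R = 1`. -/
def SO3 (R : Matrix (Fin 3) (Fin 3) ℝ) : Prop := Rᵀ * R = 1 ∧ R.det = 1

/-- Matrix-vector multiplication as a map on Euclidean space. -/
def matVec (A : Matrix (Fin 3) (Fin 3) ℝ) (u : EuclideanSpace ℝ (Fin 3)) :
    EuclideanSpace ℝ (Fin 3) :=
  (WithLp.equiv 2 (Fin 3 → ℝ)).symm (A.mulVec ((WithLp.equiv 2 (Fin 3 → ℝ)) u))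

/-- The left-trivialised Jacobian of the exponential map of `SO(3)` at `u`. -/
def Jmat (u : EuclideanSpace ℝ (Fin 3)) : Matrix (Fin 3) (Fin 3) ℝ :=
  1 - ((1 - Real.cos ‖u‖) / ‖u‖ ^ 2) • hat u
    + ((‖u‖ - Real.sin ‖u‖) / ‖u‖ ^ 3) • (hat u * hat u)

attribute [local instance] Matrix.frobeniusNormedAddCommGroup Matrix.frobeniusNormedSpace

/-!
Since `(u^∧)³ = -‖u‖² u^∧`, the exponential series collapses to Rodrigues' formula
`exp (u^∧) = 1 + (sin r / r) u^∧ + ((1 - cos r) / r²) (u^∧)²` with `r = ‖u‖`, which away from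
`u = 0` is differentiated by the product and chain rules. On the other side,
`(u × w)^∧ = [u^∧, w^∧]`, `(u × (u × w))^∧ = ⟨u, w⟩ u^∧ - r² w^∧` and
`u^∧ w^∧ u^∧ = -⟨u, w⟩ u^∧` reduce `exp (u^∧) (J_u w)^∧` to a combination of
`w^∧, u^∧, (u^∧)², u^∧ w^∧, w^∧ u^∧`, and its coefficients agree with those of the derivative
because `sin² r + cos² r = 1`.
-/

attribute [local instance] Matrix.frobeniusNormedRing Matrix.frobeniusNormedAlgebra

open NormedSpace Real
open scoped Nat InnerProductSpace

section PowThree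

variable {R A : Type*} [CommSemiring R] [Semiring A] [Algebra R A]

lemma pow_two_mul_add_one_of_pow_three_eq_smul {X : A} {t : R} (hX : X ^ 3 = t • X) (n : ℕ) :
    X ^ (2 * n + 1) = t ^ n • X := by
  induction n with
  | zero => simp
  | succ n ih =>
    rw [show 2 * (n + 1) + 1 = 2 * n + 1 + 2 by ring, pow_add, ih, smul_mul_assoc, ← pow_succ',
      hX, smul_smul, pow_succ]

lemma pow_two_mul_add_two_of_pow_three_eq_smul {X : A} {t : R} (hX : X ^ 3 = t • X) (n : ℕ) :
    X ^ (2 * n + 2) = t ^ n • X ^ 2 := by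
  rw [pow_succ, pow_two_mul_add_one_of_pow_three_eq_smul hX, smul_mul_assoc, ← sq]

end PowThree

theorem exp_eq_of_pow_three_eq_neg_sq_smul {𝔸 : Type*} [Ring 𝔸] [Algebra ℝ 𝔸]
    [TopologicalSpace 𝔸] [IsTopologicalRing 𝔸] [ContinuousSMul ℝ 𝔸] [T2Space 𝔸]
    {X : 𝔸} {θ : ℝ} (hθ : θ ≠ 0) (hX : X ^ 3 = -(θ ^ 2) • X) :
    exp X = 1 + (sin θ / θ) • X + ((1 - cos θ) / θ ^ 2) • X ^ 2 := by
  rw [exp_eq_tsum ℝ]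
  refine HasSum.tsum_eq ?_
  have hodd : HasSum (fun n : ℕ => ((2 * n + 1)! : ℝ)⁻¹ • X ^ (2 * n + 1)) ((sin θ / θ) • X) := by
    convert ((hasSum_sin θ).div_const θ).smul_const X using 2 with n
    rw [pow_two_mul_add_one_of_pow_three_eq_smul hX, smul_smul, neg_pow, ← pow_mul]
    congr 1
    field_simp
    ring
  have hcos : HasSum (fun n : ℕ => (-1 : ℝ) ^ n * θ ^ (2 * n) / (2 * n + 2)!)
      ((1 - cos θ) / θ ^ 2) := by
    have h := ((hasSum_nat_add_iff' 1).mpr (hasSum_cos θ)).neg.div_const (θ ^ 2)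
    simp only [Finset.sum_range_one, mul_zero, pow_zero, Nat.factorial_zero, Nat.cast_one,
      div_one, one_mul, neg_sub] at h
    refine h.congr_fun fun n => ?_
    rw [show 2 * (n + 1) = 2 * n + 2 by ring, pow_succ, pow_add]
    field_simp
  have heven : HasSum (fun n : ℕ => ((2 * n)! : ℝ)⁻¹ • X ^ (2 * n))
      (1 + ((1 - cos θ) / θ ^ 2) • X ^ 2) := by
    rw [← hasSum_nat_add_iff' 1]
    simp only [Finset.sum_range_one, mul_zero, pow_zero, Nat.factorial_zero, Nat.cast_one, inv_one,
      one_smul, add_sub_cancel_left]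
    refine (hcos.smul_const (X ^ 2)).congr_fun fun n => ?_
    rw [show 2 * (n + 1) = 2 * n + 2 by ring, pow_two_mul_add_two_of_pow_three_eq_smul hX,
      smul_smul, neg_pow, ← pow_mul]
    congr 1
    ring
  rw [add_right_comm]
  exact heven.even_add_odd hodd

lemma inner_eq_fin_three (u w : EuclideanSpace ℝ (Fin 3)) :
    ⟪u, w⟫_ℝ = u 0 * w 0 + u 1 * w 1 + u 2 * w 2 := by
  simp [PiLp.inner_apply, Fin.sum_univ_three, mul_comm]

lemma hat_add (u w : EuclideanSpace ℝ (Fin 3)) : hat (u + w) = hat u + hat w := by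
  ext i j; fin_cases i <;> fin_cases j <;> simp [hat] <;> ring

lemma hat_smul (c : ℝ) (u : EuclideanSpace ℝ (Fin 3)) : hat (c • u) = c • hat u := by
  ext i j; fin_cases i <;> fin_cases j <;> simp [hat]

def hatCLM : EuclideanSpace ℝ (Fin 3) →L[ℝ] Matrix (Fin 3) (Fin 3) ℝ :=
  LinearMap.toContinuousLinearMap ⟨⟨hat, hat_add⟩, hat_smul⟩

lemma hat_sub (u w : EuclideanSpace ℝ (Fin 3)) : hat (u - w) = hat u - hat w :=
  map_sub hatCLM u w

lemma hat_mul_hat_mul_hat (u w : EuclideanSpace ℝ (Fin 3)) :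
    hat u * hat w * hat u = -⟪u, w⟫_ℝ • hat u := by
  rw [inner_eq_fin_three]
  ext i j; fin_cases i <;> fin_cases j <;> simp [hat, Matrix.mul_apply, Fin.sum_univ_three] <;> ring

lemma hat_pow_three (u : EuclideanSpace ℝ (Fin 3)) : hat u ^ 3 = -(‖u‖ ^ 2) • hat u := by
  rw [← real_inner_self_eq_norm_sq, ← hat_mul_hat_mul_hat, pow_succ, sq]

lemma hat_matVec_hat (u w : EuclideanSpace ℝ (Fin 3)) :
    hat (matVec (hat u) w) = hat u * hat w - hat w * hat u := by
  ext i j; fin_cases i <;> fin_cases j <;>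
    simp [hat, matVec, dotProduct, Fin.sum_univ_three] <;> ring

lemma hat_matVec_hat_mul_hat (u w : EuclideanSpace ℝ (Fin 3)) :
    hat (matVec (hat u * hat u) w) = ⟪u, w⟫_ℝ • hat u - ‖u‖ ^ 2 • hat w := by
  rw [← real_inner_self_eq_norm_sq, inner_eq_fin_three, inner_eq_fin_three]
  ext i j; fin_cases i <;> fin_cases j <;>
    simp [hat, matVec, dotProduct, Fin.sum_univ_three] <;> ring

lemma matVec_add (A B : Matrix (Fin 3) (Fin 3) ℝ) (w : EuclideanSpace ℝ (Fin 3)) :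
    matVec (A + B) w = matVec A w + matVec B w := by
  ext i; simp [matVec, Matrix.add_mulVec]

lemma matVec_sub (A B : Matrix (Fin 3) (Fin 3) ℝ) (w : EuclideanSpace ℝ (Fin 3)) :
    matVec (A - B) w = matVec A w - matVec B w := by
  ext i; simp [matVec, Matrix.sub_mulVec]

lemma matVec_smul (c : ℝ) (A : Matrix (Fin 3) (Fin 3) ℝ) (w : EuclideanSpace ℝ (Fin 3)) :
    matVec (c • A) w = c • matVec A w := by
  ext i; simp [matVec, Matrix.smul_mulVec]

lemma matVec_one (w : EuclideanSpace ℝ (Fin 3)) : matVec 1 w = w := by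
  ext i; simp [matVec]

lemma hat_matVec_Jmat (u w : EuclideanSpace ℝ (Fin 3)) :
    hat (matVec (Jmat u) w) = hat w - ((1 - cos ‖u‖) / ‖u‖ ^ 2) • (hat u * hat w - hat w * hat u)
      + ((‖u‖ - sin ‖u‖) / ‖u‖ ^ 3) • (⟪u, w⟫_ℝ • hat u - ‖u‖ ^ 2 • hat w) := by
  rw [Jmat, matVec_add, matVec_sub, matVec_smul, matVec_smul, matVec_one, hat_add, hat_sub,
    hat_smul, hat_smul, hat_matVec_hat, hat_matVec_hat_mul_hat]

theorem exp_hat (u : EuclideanSpace ℝ (Fin 3)) :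
    exp (hat u) = 1 + (sin ‖u‖ / ‖u‖) • hat u + ((1 - cos ‖u‖) / ‖u‖ ^ 2) • hat u ^ 2 := by
  rcases eq_or_ne u 0 with rfl | hu
  · simp [show hat 0 = 0 from map_zero hatCLM]
  · exact exp_eq_of_pow_three_eq_neg_sq_smul (norm_ne_zero_iff.mpr hu) (hat_pow_three u)

lemma hasFDerivAt_norm_of_ne_zero {F : Type*} [NormedAddCommGroup F] [InnerProductSpace ℝ F]
    {x : F} (hx : x ≠ 0) : HasFDerivAt (fun y : F => ‖y‖) (‖x‖⁻¹ • innerSL ℝ x) x := by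
  have hsqrt := (hasDerivAt_sqrt (pow_ne_zero 2 (norm_ne_zero_iff.mpr hx))).comp_hasFDerivAt x
    (hasStrictFDerivAt_norm_sq x).hasFDerivAt
  simp only [Function.comp_def, sqrt_sq (norm_nonneg _)] at hsqrt
  refine hsqrt.congr_fderiv ?_
  ext y
  simp
  field_simp

theorem hasFDerivAt_exp_hat {u : EuclideanSpace ℝ (Fin 3)} (hu : u ≠ 0) :
    ∃ D : EuclideanSpace ℝ (Fin 3) →L[ℝ] Matrix (Fin 3) (Fin 3) ℝ,
      HasFDerivAt (fun v : EuclideanSpace ℝ (Fin 3) => exp (hat v)) D u ∧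
      ∀ w, D w = (sin ‖u‖ / ‖u‖) • hat w
        + ((1 - cos ‖u‖) / ‖u‖ ^ 2) • (hat u * hat w + hat w * hat u)
        + (⟪u, w⟫_ℝ * ((‖u‖ * cos ‖u‖ - sin ‖u‖) / ‖u‖ ^ 3)) • hat u
        + (⟪u, w⟫_ℝ * ((‖u‖ * sin ‖u‖ - 2 * (1 - cos ‖u‖)) / ‖u‖ ^ 4)) • (hat u * hat u) := by
  have hr : ‖u‖ ≠ 0 := norm_ne_zero_iff.mpr hu
  have hnorm := hasFDerivAt_norm_of_ne_zero hu
  have hsinc : HasDerivAt (fun t => sin t / t) ((‖u‖ * cos ‖u‖ - sin ‖u‖) / ‖u‖ ^ 2) ‖u‖ :=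
    ((hasDerivAt_sin ‖u‖).div (hasDerivAt_id ‖u‖) hr).congr_deriv (by simp only [id]; ring)
  have hcosc : HasDerivAt (fun t => (1 - cos t) / t ^ 2)
      ((‖u‖ * sin ‖u‖ - 2 * (1 - cos ‖u‖)) / ‖u‖ ^ 3) ‖u‖ :=
    (((hasDerivAt_const _ 1).sub (hasDerivAt_cos ‖u‖)).div (hasDerivAt_pow 2 ‖u‖)
      (pow_ne_zero 2 hr)).congr_deriv (by simp only [Pi.sub_apply]; field_simp; ring)
  have hhat : HasFDerivAt hat hatCLM u := hatCLM.hasFDerivAt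
  have hF := (((hsinc.comp_hasFDerivAt u hnorm).smul hhat).const_add 1).add
    ((hcosc.comp_hasFDerivAt u hnorm).smul (hhat.mul' hhat))
  have hexp : (fun v : EuclideanSpace ℝ (Fin 3) => exp (hat v)) = fun v =>
      1 + (sin ‖v‖ / ‖v‖) • hat v + ((1 - cos ‖v‖) / ‖v‖ ^ 2) • (hat v * hat v) :=
    funext fun v => by rw [exp_hat, sq (hat v)]
  rw [hexp]
  refine ⟨_, hF, fun w => ?_⟩
  -- `hF`'s derivative mixes the Frobenius and the default instances on matrices, so the
  -- evaluation lemmas of `simp` do not fire; it is evaluated at `w` by unfolding.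
  change (sin ‖u‖ / ‖u‖) • hat w
      + ((‖u‖ * cos ‖u‖ - sin ‖u‖) / ‖u‖ ^ 2 * (‖u‖⁻¹ * ⟪u, w⟫_ℝ)) • hat u
      + (((1 - cos ‖u‖) / ‖u‖ ^ 2) • (hat u * hat w + hat w * hat u)
      + ((‖u‖ * sin ‖u‖ - 2 * (1 - cos ‖u‖)) / ‖u‖ ^ 3 * (‖u‖⁻¹ * ⟪u, w⟫_ℝ)) • (hat u * hat u)) = _
  match_scalars <;> field_simp

theorem exp_hat_mul_hat_matVec_Jmat {u : EuclideanSpace ℝ (Fin 3)} (hu : u ≠ 0)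
    (w : EuclideanSpace ℝ (Fin 3)) :
    exp (hat u) * hat (matVec (Jmat u) w)
      = (sin ‖u‖ / ‖u‖) • hat w + ((1 - cos ‖u‖) / ‖u‖ ^ 2) • (hat u * hat w + hat w * hat u)
        + (⟪u, w⟫_ℝ * ((‖u‖ * cos ‖u‖ - sin ‖u‖) / ‖u‖ ^ 3)) • hat u
        + (⟪u, w⟫_ℝ * ((‖u‖ * sin ‖u‖ - 2 * (1 - cos ‖u‖)) / ‖u‖ ^ 4)) • (hat u * hat u) := by
  have hr : ‖u‖ ≠ 0 := norm_ne_zero_iff.mpr hu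
  have hAWA := hat_mul_hat_mul_hat u w
  have hAAA : hat u * hat u * hat u = -(‖u‖ ^ 2) • hat u := by
    rw [← hat_pow_three, pow_three, mul_assoc]
  have hAAWA : hat u * hat u * hat w * hat u = -⟪u, w⟫_ℝ • (hat u * hat u) := by
    rw [show hat u * hat u * hat w * hat u = hat u * (hat u * hat w * hat u) by
      simp only [mul_assoc], hAWA, mul_smul_comm]
  rw [exp_hat, hat_matVec_Jmat, sq (hat u)]
  simp only [add_mul, mul_add, mul_sub, smul_mul_assoc, mul_smul_comm, smul_add, smul_sub,
    one_mul, ← mul_assoc, hAWA, hAAA, hAAWA, smul_smul]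
  match_scalars <;> field_simp
  · ring
  · linear_combination sin_sq_add_cos_sq ‖u‖
  · ring
  · ring
  · linear_combination -⟪u, w⟫_ℝ * sin_sq_add_cos_sq ‖u‖

/-- For `u ≠ 0`, the map `v ↦ exp (v^∧)` is differentiable at `u` and its derivative in the
direction `w` is `exp (u^∧) * (J_u w)^∧`. -/
theorem so3_exp_hasFDerivAt (u : EuclideanSpace ℝ (Fin 3)) (hu : u ≠ 0) :
    ∃ D : EuclideanSpace ℝ (Fin 3) →L[ℝ] Matrix (Fin 3) (Fin 3) ℝ,
      HasFDerivAt (fun v : EuclideanSpace ℝ (Fin 3) => NormedSpace.exp (hat v)) D u ∧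
      ∀ w : EuclideanSpace ℝ (Fin 3),
        D w = NormedSpace.exp (hat u) * hat (matVec (Jmat u) w) := by
  obtain ⟨D, hD, hDw⟩ := hasFDerivAt_exp_hat hu
  exact ⟨D, hD, fun w => (hDw w).trans (exp_hat_mul_hat_matVec_Jmat hu w).symm⟩
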